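/- For the path P_n on n vertices: if n is odd then (n+1)²/4 ≤ ρ(P_n) ≤ 1 + n(n−1)/2, and if n is even then n(n+2)/4 ≤ ρ(P_n) ≤ 1 + n(n−1)/2. In particular ρ(P_3) = 4. -/

import Mathlib

/-!
For the upper bound, blow up `P_n` so that level `i ≥ 1` is a clique of size `i`, joined
completely to the neighbouring levels; a rainbow induced `P_n` is then found greedily, level by
level. For the lower bound, the even-indexed vertices of a rainbow induced `P_m` form an
independent set of size `⌈m/2⌉`; recolouring them with one new colour and deleting them leaves a
graph that still forces a rainbow sequence of length `m - 1` inducing a subgraph of a path, so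
induction gives at least `∑_{s ≤ m} ⌈s/2⌉ = ⌊(m+1)²/4⌋` vertices.
-/

/-- `ArrowsR G H` (written `G →r H`) means: every proper vertex coloring of `G`
contains a rainbow induced subgraph isomorphic to `H`, i.e. an induced copy of `H`
(a graph embedding) whose vertices receive pairwise distinct colors. -/
def ArrowsR {α β : Type} (G : SimpleGraph α) (H : SimpleGraph β) : Prop :=
  ∀ c : α → ℕ, (∀ u v : α, G.Adj u v → c u ≠ c v) →
    ∃ f : H ↪g G, Function.Injective fun h => c (f h)

/-- `rho H` is the minimum number of vertices of a graph `G` with `G →r H`. -/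
noncomputable def rho {β : Type} (H : SimpleGraph β) : ℕ :=
  sInf {m : ℕ | ∃ G : SimpleGraph (Fin m), ArrowsR G H}

open SimpleGraph Function

theorem add_two_sq_div_four (m : ℕ) : (m + 2) ^ 2 / 4 = (m + 1) ^ 2 / 4 + (m / 2 + 1) := by
  obtain ⟨k, rfl | rfl⟩ := Nat.even_or_odd' m
  · rw [show (2 * k + 2) ^ 2 = 4 * k ^ 2 + 8 * k + 4 by ring,
      show (2 * k + 1) ^ 2 = 4 * k ^ 2 + 4 * k + 1 by ring]
    omega
  · rw [show (2 * k + 1 + 2) ^ 2 = 4 * k ^ 2 + 12 * k + 9 by ring,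
      show (2 * k + 1 + 1) ^ 2 = 4 * k ^ 2 + 8 * k + 4 by ring]
    omega

theorem SimpleGraph.comap_succAbove_pathGraph_le {m : ℕ} (p : Fin (m + 1)) :
    (pathGraph (m + 1)).comap p.succAbove ≤ pathGraph m := by
  intro i j h
  simp only [comap_adj, pathGraph_adj, Fin.succAbove] at h ⊢
  split_ifs at h <;> simp only [Fin.lt_def, Fin.val_castSucc, Fin.val_succ] at * <;> omega

section Transport

variable {α β γ : Type} {G : SimpleGraph α} {H : SimpleGraph β}

theorem ArrowsR.of_iso {G' : SimpleGraph γ} (e : G ≃g G') (h : ArrowsR G H) : ArrowsR G' H := by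
  intro c hc
  obtain ⟨f, hf⟩ := h (c ∘ e) fun u v huv => hc _ _ (e.map_adj_iff.2 huv)
  exact ⟨f.trans e.toEmbedding, hf⟩

theorem ArrowsR.exists_fin [Fintype α] (h : ArrowsR G H) :
    ∃ G' : SimpleGraph (Fin (Fintype.card α)), ArrowsR G' H :=
  ⟨_, h.of_iso (Iso.map (Fintype.equivFin α) G)⟩

theorem ArrowsR.rho_le [Fintype α] (h : ArrowsR G H) : rho H ≤ Fintype.card α :=
  Nat.sInf_le h.exists_fin

end Transport

section LowerBound

/-- A weakening of `ArrowsR G (pathGraph m)`: the rainbow sequence only has to induce a subgraph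
of the path, and this property survives deleting one of its vertices. -/
def ArrowsPathSubgraph {α : Type*} (G : SimpleGraph α) (m : ℕ) : Prop :=
  ∀ c : α → ℕ, (∀ u v : α, G.Adj u v → c u ≠ c v) →
    ∃ v : Fin m → α, G.comap v ≤ pathGraph m ∧ Injective (c ∘ v)

theorem ArrowsR.arrowsPathSubgraph {α : Type} {G : SimpleGraph α} {m : ℕ}
    (h : ArrowsR G (pathGraph m)) : ArrowsPathSubgraph G m := by
  intro c hc
  obtain ⟨f, hf⟩ := h c hc
  exact ⟨f, fun i j hij => f.map_adj_iff.1 hij, hf⟩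

variable {α : Type*} {G : SimpleGraph α} {m : ℕ}

/-- Once `s` gets a single new colour, a rainbow sequence meets `s` at most once, so one entry can
be dropped. -/
theorem ArrowsPathSubgraph.induce_compl {s : Set α} (hs : G.IsIndepSet s)
    (h : ArrowsPathSubgraph G (m + 1)) : ArrowsPathSubgraph (G.induce sᶜ) m := by
  classical
  intro c hc
  let c' : α → ℕ := fun a => if ha : a ∈ s then 0 else c ⟨a, ha⟩ + 1
  have hc' : ∀ u v, G.Adj u v → c' u ≠ c' v := by
    intro u v huv
    by_cases hu : u ∈ s <;> by_cases hv : v ∈ s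
    · exact absurd huv (hs hu hv (G.ne_of_adj huv))
    · simp [c', hu, hv]
    · simp [c', hu, hv]
    · simpa [c', hu, hv] using hc ⟨u, hu⟩ ⟨v, hv⟩ huv
  obtain ⟨w, hw, hinj⟩ := h c' hc'
  obtain ⟨p, hp⟩ : ∃ p : Fin (m + 1), ∀ i, w (p.succAbove i) ∉ s := by
    by_cases hex : ∃ k, w k ∈ s
    · obtain ⟨p, hp⟩ := hex
      refine ⟨p, fun i hi => Fin.succAbove_ne p i (hinj ?_)⟩
      simp [c', hi, hp]
    · push Not at hex
      exact ⟨0, fun i => hex _⟩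
  refine ⟨fun i => ⟨w (p.succAbove i), hp i⟩, fun i j hij => ?_, fun i j hij => ?_⟩
  · exact comap_succAbove_pathGraph_le p (hw hij)
  · refine Fin.succAbove_right_injective (p := p) (hinj ?_)
    simpa [c', hp] using hij

theorem exists_isIndepSet_ncard_of_comap_le_pathGraph {v : Fin (m + 1) → α} (hv : Injective v)
    (hG : G.comap v ≤ pathGraph (m + 1)) :
    ∃ s : Set α, G.IsIndepSet s ∧ s.ncard = m / 2 + 1 := by
  let e : Fin (m / 2 + 1) → α := fun j => v ⟨2 * j, by omega⟩
  have he : Injective e := fun i j hij => by simpa [Fin.ext_iff] using hv hij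
  refine ⟨Set.range e, ?_, by rw [Set.ncard_range_of_injective he, Nat.card_fin]⟩
  rintro _ ⟨i, rfl⟩ _ ⟨j, rfl⟩ - hij
  have := pathGraph_adj.1 (hG hij)
  simp only at this
  omega

theorem ArrowsPathSubgraph.sq_div_four_le_card [Finite α] (h : ArrowsPathSubgraph G m) :
    (m + 1) ^ 2 / 4 ≤ Nat.card α := by
  induction m generalizing α with
  | zero => simp
  | succ m ih =>
    obtain ⟨c, hc⟩ := Countable.exists_injective_nat α
    obtain ⟨v, hv, hcv⟩ := h c fun u w huw huw' => G.ne_of_adj huw (hc huw')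
    obtain ⟨s, hs, hcard⟩ := exists_isIndepSet_ncard_of_comap_le_pathGraph hcv.of_comp hv
    have hrest := ih (h.induce_compl hs)
    rw [Nat.card_coe_set_eq] at hrest
    rw [← Set.ncard_add_ncard_compl s, add_two_sq_div_four]
    omega

end LowerBound

section UpperBound

/-- Vertices of the blow-up of `P_n` used for the upper bound: level `0` is the single vertex
`none`, and level `k + 1` (for `k + 1 < n`) consists of the `k + 1` vertices `some ⟨k, t⟩`. -/
abbrev PathBlowUpVert (n : ℕ) := Option ((k : Fin (n - 1)) × Fin (k + 1))

def PathBlowUpVert.level {n : ℕ} : PathBlowUpVert n → ℕ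
  | none => 0
  | some x => x.1 + 1

def pathBlowUp (n : ℕ) : SimpleGraph (PathBlowUpVert n) where
  Adj u v := u ≠ v ∧ u.level ≤ v.level + 1 ∧ v.level ≤ u.level + 1
  symm := ⟨fun _ _ h => ⟨h.1.symm, h.2.2, h.2.1⟩⟩
  loopless := ⟨fun _ h => h.1 rfl⟩

theorem pathBlowUp_adj {n : ℕ} {u v : PathBlowUpVert n} :
    (pathBlowUp n).Adj u v ↔ u ≠ v ∧ u.level ≤ v.level + 1 ∧ v.level ≤ u.level + 1 :=
  Iff.rfl

theorem card_pathBlowUpVert (n : ℕ) : Fintype.card (PathBlowUpVert n) = 1 + n * (n - 1) / 2 := by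
  rw [Fintype.card_option, Fintype.card_sigma]
  simp only [Fintype.card_fin]
  rw [Fin.sum_univ_eq_sum_range (· + 1)]
  cases n with
  | zero => simp
  | succ N =>
    have := Finset.sum_range_succ' (fun i => i) N
    rw [Finset.sum_range_id] at this
    simp only [add_tsub_cancel_right] at this ⊢
    omega

variable {n : ℕ} {c : PathBlowUpVert n → ℕ}

/-- For `k ≥ 1`, the `k` vertices of level `k` carry `k` distinct colours, none of them the colour
of `s (k - 1)`, so one of them avoids the `k - 1` colours of the earlier vertices. -/
theorem exists_level_fresh_color (hc : ∀ u v, (pathBlowUp n).Adj u v → c u ≠ c v) {k : ℕ}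
    (hk : k < n) (s : Fin k → PathBlowUpVert n) (hs : ∀ i, (s i).level = i) :
    ∃ x : PathBlowUpVert n, x.level = k ∧ c x ∉ Set.range (c ∘ s) := by
  classical
  cases k with
  | zero => exact ⟨none, rfl, fun ⟨i, _⟩ => i.elim0⟩
  | succ j =>
    let block : Fin (j + 1) → PathBlowUpVert n := fun t => some ⟨⟨j, by omega⟩, t⟩
    have hblock : ∀ t, (block t).level = j + 1 := fun _ => rfl
    have hinj : Injective (c ∘ block) := by
      intro t t' htt'
      by_contra hne
      exact hc _ _
        (pathBlowUp_adj.2 ⟨by simpa [block] using hne, by simp [hblock], by simp [hblock]⟩) htt'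
    have hcard : (Finset.univ.image fun i : Fin j => c (s i.castSucc)).card <
        (Finset.univ.image (c ∘ block)).card := by
      rw [Finset.card_image_of_injective _ hinj, Finset.card_univ, Fintype.card_fin]
      exact (Finset.card_image_le.trans (by simp)).trans_lt j.lt_succ_self
    obtain ⟨_, hmem, hnotMem⟩ := Finset.exists_mem_notMem_of_card_lt_card hcard
    obtain ⟨t, -, rfl⟩ := Finset.mem_image.1 hmem
    refine ⟨block t, hblock t, ?_⟩
    rintro ⟨i, hi⟩
    induction i using Fin.lastCases with
    | last =>
      have hlast : (s (Fin.last j)).level = j := hs _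
      refine hc _ _ (pathBlowUp_adj.2
        ⟨fun h => ?_, by rw [hblock, hlast], by rw [hblock, hlast]; omega⟩) hi.symm
      simpa [hblock, hlast] using congrArg PathBlowUpVert.level h
    | cast i => exact hnotMem (Finset.mem_image.2 ⟨i, Finset.mem_univ _, hi⟩)

theorem exists_rainbow_levelwise (hc : ∀ u v, (pathBlowUp n).Adj u v → c u ≠ c v) :
    ∀ k ≤ n, ∃ s : Fin k → PathBlowUpVert n,
      (∀ i, (s i).level = i) ∧ Injective (c ∘ s) := by
  intro k
  induction k with
  | zero => exact fun _ => ⟨Fin.elim0, fun i => i.elim0, fun i => i.elim0⟩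
  | succ k ih =>
    intro hk
    obtain ⟨s, hs, hinj⟩ := ih (by omega)
    obtain ⟨x, hx, hfresh⟩ := exists_level_fresh_color hc (by omega) s hs
    refine ⟨Fin.snoc s x, fun i => ?_, ?_⟩
    · induction i using Fin.lastCases with
      | last => simpa using hx
      | cast i => simpa using hs i
    · rw [Fin.comp_snoc]
      exact Fin.snoc_injective_of_injective hinj hfresh

theorem arrowsR_pathBlowUp (n : ℕ) : ArrowsR (pathBlowUp n) (pathGraph n) := by
  intro c hc
  obtain ⟨s, hs, hinj⟩ := exists_rainbow_levelwise hc n le_rfl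
  have hs_inj : Injective s := hinj.of_comp
  refine ⟨⟨⟨s, hs_inj⟩, fun {i j} => ?_⟩, hinj⟩
  simp only [Function.Embedding.coeFn_mk, pathBlowUp_adj, pathGraph_adj, hs, hs_inj.ne_iff,
    ← Fin.val_ne_iff]
  omega

end UpperBound

theorem rho_pathGraph_le (n : ℕ) : rho (pathGraph n) ≤ 1 + n * (n - 1) / 2 :=
  card_pathBlowUpVert n ▸ (arrowsR_pathBlowUp n).rho_le

theorem sq_div_four_le_rho_pathGraph (n : ℕ) : (n + 1) ^ 2 / 4 ≤ rho (pathGraph n) :=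
  le_csInf ⟨_, (arrowsR_pathBlowUp n).exists_fin⟩ fun m ⟨_, hG⟩ => by
    simpa using hG.arrowsPathSubgraph.sq_div_four_le_card

/-- Bounds for paths: for odd `n`, `(n+1)²/4 ≤ ρ(P_n) ≤ 1 + n(n−1)/2`; for even `n`,
`n(n+2)/4 ≤ ρ(P_n) ≤ 1 + n(n−1)/2`. In particular `ρ(P_3) = 4`. -/
theorem stmt18 (n : ℕ) :
    (Odd n → (n + 1) ^ 2 / 4 ≤ rho (SimpleGraph.pathGraph n) ∧
      rho (SimpleGraph.pathGraph n) ≤ 1 + n * (n - 1) / 2) ∧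
    (Even n → n * (n + 2) / 4 ≤ rho (SimpleGraph.pathGraph n) ∧
      rho (SimpleGraph.pathGraph n) ≤ 1 + n * (n - 1) / 2) ∧
    rho (SimpleGraph.pathGraph 3) = 4 := by
  have hlower := sq_div_four_le_rho_pathGraph n
  refine ⟨fun _ => ⟨hlower, rho_pathGraph_le n⟩, fun _ => ⟨?_, rho_pathGraph_le n⟩, ?_⟩
  · exact (Nat.div_le_div_right (by nlinarith)).trans hlower
  · exact le_antisymm (rho_pathGraph_le 3) (sq_div_four_le_rho_pathGraph 3)
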